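/- arXiv:math/0607672 — 4 statements merged into one kernel-verified Lean document; each statement's English description precedes it below -/
import Mathlib

section
/- Let f : [0, c+h] → ℝ be concave and nondecreasing with f(0) = 0, where 0 < h ≤ c. Define ρ(s) = (2f(s) - f(s-h) - f(s+h)) / f(h) for s ∈ [h, c] (note ρ(s) ≥ 0 by concavity). Then ∫_h^c ρ(s) ds ≤ h. -/
open intervalIntegral Set

theorem second_difference_integral_bound (c h : ℝ) (f : ℝ → ℝ)
    (hh : 0 < h) (hhc : h ≤ c)
    (hconc : ConcaveOn ℝ (Set.Icc (0 : ℝ) (c + h)) f)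
    (hmono : MonotoneOn f (Set.Icc (0 : ℝ) (c + h)))
    (hf0 : f 0 = 0) (hfh : 0 < f h) :
    ∫ s in h..c, (2 * f s - f (s - h) - f (s + h)) ≤ h * f h := by
  have hc0 : (0:ℝ) ≤ c := hh.le.trans hhc
  -- integrability on any subinterval
  have hII : ∀ a b, a ∈ Icc (0:ℝ) (c+h) → b ∈ Icc (0:ℝ) (c+h) →
      IntervalIntegrable f MeasureTheory.volume a b := by
    intro a b ha hb
    exact (hmono.mono (Set.uIcc_subset_Icc ha hb)).intervalIntegrable
  have m0 : (0:ℝ) ∈ Icc (0:ℝ) (c+h) := ⟨le_refl _, by linarith⟩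
  have mh : h ∈ Icc (0:ℝ) (c+h) := ⟨hh.le, by linarith⟩
  have m2h : 2*h ∈ Icc (0:ℝ) (c+h) := ⟨by linarith, by linarith⟩
  have mch : c - h ∈ Icc (0:ℝ) (c+h) := ⟨by linarith, by linarith⟩
  have mc : c ∈ Icc (0:ℝ) (c+h) := ⟨hc0, by linarith⟩
  have mcph : c + h ∈ Icc (0:ℝ) (c+h) := ⟨by linarith, le_refl _⟩
  -- rewrite the integral
  have i1 : IntervalIntegrable f MeasureTheory.volume h c := hII _ _ mh mc
  have isub : IntervalIntegrable (fun s => f (s - h)) MeasureTheory.volume h c := by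
    have := (hII 0 (c-h) m0 mch).comp_sub_right h
    simpa using this
  have iadd : IntervalIntegrable (fun s => f (s + h)) MeasureTheory.volume h c := by
    have := (hII (2*h) (c+h) m2h mcph).comp_add_right h
    have h2 : 2*h - h = h := by ring
    rw [h2] at this
    simpa using this
  have split : ∫ s in h..c, (2 * f s - f (s - h) - f (s + h)) =
      (∫ s in h..c, f s) + (∫ s in h..c, f s) - (∫ s in (0:ℝ)..(c-h), f s)
        - (∫ s in (2*h)..(c+h), f s) := by
    rw [intervalIntegral.integral_sub (by exact (i1.const_mul 2).sub isub) iadd,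
        intervalIntegral.integral_sub (i1.const_mul 2) isub,
        intervalIntegral.integral_const_mul]
    rw [intervalIntegral.integral_comp_sub_right (fun s => f s) h,
        intervalIntegral.integral_comp_add_right (fun s => f s) h]
    have : h - h = 0 := by ring
    rw [this]
    have : h + h = 2*h := by ring
    rw [this]
    ring
  rw [split]
  -- adjacent interval identities
  have a1 : (∫ s in (0:ℝ)..(c-h), f s) + (∫ s in (c-h)..c, f s) = ∫ s in (0:ℝ)..c, f s :=
    intervalIntegral.integral_add_adjacent_intervals (hII _ _ m0 mch) (hII _ _ mch mc)
  have a2 : (∫ s in (0:ℝ)..h, f s) + (∫ s in h..c, f s) = ∫ s in (0:ℝ)..c, f s :=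
    intervalIntegral.integral_add_adjacent_intervals (hII _ _ m0 mh) (hII _ _ mh mc)
  have a3 : (∫ s in h..(2*h), f s) + (∫ s in (2*h)..(c+h), f s) = ∫ s in h..(c+h), f s :=
    intervalIntegral.integral_add_adjacent_intervals (hII _ _ mh m2h) (hII _ _ m2h mcph)
  have a4 : (∫ s in h..c, f s) + (∫ s in c..(c+h), f s) = ∫ s in h..(c+h), f s :=
    intervalIntegral.integral_add_adjacent_intervals (hII _ _ mh mc) (hII _ _ mc mcph)
  -- bounds
  have b1 : (∫ s in (c-h)..c, f s) ≤ h * f c := by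
    have : (∫ s in (c-h)..c, f s) ≤ ∫ s in (c-h)..c, f c := by
      apply intervalIntegral.integral_mono_on (by linarith) (hII _ _ mch mc)
        intervalIntegrable_const
      intro x hx
      exact hmono ⟨by linarith [hx.1], by linarith [hx.2]⟩ mc hx.2
    simpa using this.trans_eq (by rw [intervalIntegral.integral_const]; simp [smul_eq_mul])
  have b2 : h * f c ≤ ∫ s in c..(c+h), f s := by
    have : (∫ s in c..(c+h), f c) ≤ ∫ s in c..(c+h), f s := by
      apply intervalIntegral.integral_mono_on (by linarith) intervalIntegrable_const
        (hII _ _ mc mcph)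
      intro x hx
      exact hmono mc ⟨by linarith [hx.1], hx.2⟩ hx.1
    calc h * f c = ∫ s in c..(c+h), f c := by rw [intervalIntegral.integral_const]; simp [smul_eq_mul]
      _ ≤ _ := this
  -- concavity: f (s + h) ≤ f s + f h for s ∈ [0, h]
  have key : ∀ s ∈ Icc (0:ℝ) h, f (s + h) ≤ f s + f h := by
    intro s hs
    have hsh : 0 < s + h := by linarith [hs.1]
    have msh : s + h ∈ Icc (0:ℝ) (c+h) := ⟨by linarith [hs.1], by linarith [hs.2]⟩
    have ha : (0:ℝ) ≤ s / (s+h) := div_nonneg hs.1 hsh.le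
    have hb : (0:ℝ) ≤ h / (s+h) := div_nonneg hh.le hsh.le
    have h1 := hconc.2 m0 msh ha hb (by field_simp <;> ring)
    have h2 := hconc.2 m0 msh hb ha (by field_simp <;> ring)
    simp only [smul_eq_mul, mul_zero, hf0, zero_add, mul_comm] at h1 h2
    have e1 : (s+h) * (h / (s+h)) = h := by field_simp
    have e2 : (s+h) * (s / (s+h)) = s := by field_simp
    rw [e1] at h1
    rw [e2] at h2
    -- h1 : f (s+h) * (h/(s+h)) ≤ f h  (roughly), h2 similar
    have hsum : f (s+h) * (s/(s+h)) + f (s+h) * (h/(s+h)) = f (s+h) := by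
      field_simp
    linarith [h1, h2]
  have b3 : (∫ s in h..(2*h), f s) ≤ (∫ s in (0:ℝ)..h, f s) + h * f h := by
    have e : (∫ s in h..(2*h), f s) = ∫ s in (0:ℝ)..h, f (s + h) := by
      rw [intervalIntegral.integral_comp_add_right (fun s => f s) h]
      norm_num [two_mul]
    rw [e]
    have : (∫ s in (0:ℝ)..h, f (s + h)) ≤ ∫ s in (0:ℝ)..h, (f s + f h) := by
      apply intervalIntegral.integral_mono_on hh.le
      · have := (hII h (2*h) mh m2h).comp_add_right h
        have hz : h - h = 0 := by ring
        rw [hz] at this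
        have h2 : 2*h - h = h := by ring
        rw [h2] at this
        exact this
      · exact (hII _ _ m0 mh).add intervalIntegrable_const
      · exact key
    refine this.trans ?_
    rw [intervalIntegral.integral_add (hII _ _ m0 mh) intervalIntegrable_const,
        intervalIntegral.integral_const]
    simp [mul_comm]
  linarith
end

section
/- Let σ² : [0, ∞) → [0, ∞) be concave and nondecreasing with σ²(0) = 0, and let ρ_h(s) = (σ²(s+h) - 2σ²(s) + σ²(s-h))/(2σ²(h)) for s ≥ h, and ρ_h(s) = (σ²(s+h) + σ²(h-s) - 2σ²(s))/(2σ²(h)) for 0 ≤ s ≤ h. Then for any 0 < h ≤ c with σ²(h) > 0, ∫_0^h |ρ_h(s)| ds ≤ 2h. -/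
lemma concave_subadd (f : ℝ → ℝ) (hconc : ConcaveOn ℝ (Set.Ici (0 : ℝ)) f)
    (hf0 : f 0 = 0) {a b : ℝ} (ha : 0 ≤ a) (hb : 0 ≤ b) :
    f (a + b) ≤ f a + f b := by
  rcases eq_or_lt_of_le (add_nonneg ha hb) with h0 | hpos
  · have ha0 : a = 0 := by linarith
    have hb0 : b = 0 := by linarith
    simp [ha0, hb0, hf0]
  · set t := a + b with ht
    have hne : t ≠ 0 := hpos.ne'
    have e1 : (b / t) • (0:ℝ) + (a / t) • t = a := by
      simp [smul_eq_mul, div_mul_cancel₀, hne]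
    have e2 : (a / t) • (0:ℝ) + (b / t) • t = b := by
      simp [smul_eq_mul, div_mul_cancel₀, hne]
    have h1 := hconc.2 (Set.mem_Ici.2 le_rfl) (Set.mem_Ici.2 hpos.le)
        (div_nonneg hb hpos.le) (div_nonneg ha hpos.le)
        (by field_simp; linarith)
    rw [e1] at h1
    have h2 := hconc.2 (Set.mem_Ici.2 le_rfl) (Set.mem_Ici.2 hpos.le)
        (div_nonneg ha hpos.le) (div_nonneg hb hpos.le)
        (by field_simp; linarith)
    rw [e2] at h2
    have hsum : (a / t) * f t + (b / t) * f t = f t := by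
      field_simp
      ring
    simp only [smul_eq_mul, hf0, mul_zero, zero_add] at h1 h2
    linarith

theorem rho_integral_near_zero_bound (f : ℝ → ℝ) (c h : ℝ)
    (hconc : ConcaveOn ℝ (Set.Ici (0 : ℝ)) f)
    (hmono : MonotoneOn f (Set.Ici (0 : ℝ)))
    (hf0 : f 0 = 0) (hh : 0 < h) (hhc : h ≤ c) (hfh : 0 < f h) :
    ∫ s in (0 : ℝ)..h, |(f (s + h) + f (h - s) - 2 * f s) / (2 * f h)| ≤ 2 * h := by
  have key : ∀ s ∈ Set.uIoc (0 : ℝ) h,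
      ‖|(f (s + h) + f (h - s) - 2 * f s) / (2 * f h)|‖ ≤ 1 := by
    intro s hs
    rw [Set.uIoc_of_le hh.le] at hs
    obtain ⟨hs0, hsh⟩ := hs
    have hs0' : (0:ℝ) ≤ s := hs0.le
    have hhs : (0:ℝ) ≤ h - s := by linarith
    have hfs0 : 0 ≤ f s := by
      have := hmono (Set.mem_Ici.2 le_rfl) (Set.mem_Ici.2 hs0') hs0'
      linarith [hf0 ▸ this]
    have hfhs0 : 0 ≤ f (h - s) := by
      have := hmono (Set.mem_Ici.2 le_rfl) (Set.mem_Ici.2 hhs) hhs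
      linarith [hf0 ▸ this]
    have hsub : f (s + h) ≤ f s + f h := concave_subadd f hconc hf0 hs0' hh.le
    have hup1 : f (h - s) ≤ f h := hmono (Set.mem_Ici.2 hhs) (Set.mem_Ici.2 hh.le) (by linarith)
    have hup2 : f s ≤ f h := hmono (Set.mem_Ici.2 hs0') (Set.mem_Ici.2 hh.le) hsh
    have hlow : f s ≤ f (s + h) := hmono (Set.mem_Ici.2 hs0') (Set.mem_Ici.2 (by linarith)) (by linarith)
    have habs : |f (s + h) + f (h - s) - 2 * f s| ≤ 2 * f h := by
      rw [abs_le]; constructor <;> linarith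
    rw [Real.norm_eq_abs, abs_abs, abs_div]
    rw [div_le_one (by positivity : (0:ℝ) < |2 * f h|)]
    calc |f (s + h) + f (h - s) - 2 * f s| ≤ 2 * f h := habs
      _ ≤ |2 * f h| := le_abs_self _
  calc ∫ s in (0:ℝ)..h, |(f (s + h) + f (h - s) - 2 * f s) / (2 * f h)|
      ≤ ‖∫ s in (0:ℝ)..h, |(f (s + h) + f (h - s) - 2 * f s) / (2 * f h)|‖ := by
        rw [Real.norm_eq_abs]; exact le_abs_self _
    _ ≤ 1 * |h - 0| := intervalIntegral.norm_integral_le_of_norm_le_const key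
    _ ≤ 2 * h := by rw [abs_of_nonneg (by linarith)]; linarith
end

section
/- Suppose ψ : (0,∞) → (0,∞) satisfies ψ(λ) ≥ λ^γ for all λ ≥ M (some γ > 0, M ≥ 1), λ²/ψ(λ) is bounded on (0, M], and h^(2-γ') = O(σ₀²(h)) as h ↓ 0 for some γ' > 0, where σ₀²(h) = (4/π)∫_0^∞ sin²(λh/2)/ψ(λ) dλ. Then for each α > 0 there exists ε > 0 such that σ̃_α²(h) := (4/π)∫_0^∞ sin²(λh/2) · α/(ψ(λ)(α+ψ(λ))) dλ = O(h^ε σ₀²(h)) as h ↓ 0. -/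
open Real Filter Asymptotics MeasureTheory

set_option maxHeartbeats 1000000 in
theorem sigma_tilde_bigO (ψ : ℝ → ℝ) (γ γ' M : ℝ)
    (hγ : 0 < γ) (hM : 1 ≤ M)
    (hψpos : ∀ lam ∈ Set.Ioi (0 : ℝ), 0 < ψ lam)
    (hψlarge : ∀ lam : ℝ, M ≤ lam → lam ^ γ ≤ ψ lam)
    (hψsmall : ∃ C : ℝ, ∀ lam ∈ Set.Ioc (0 : ℝ) M, lam ^ 2 ≤ C * ψ lam)
    (hγ' : 0 < γ')
    (hσ₀ : (fun h : ℝ => h ^ (2 - γ')) =O[nhdsWithin 0 (Set.Ioi 0)]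
      (fun h : ℝ => (4 / π) * ∫ lam in Set.Ioi (0 : ℝ), (Real.sin (lam * h / 2)) ^ 2 / ψ lam))
    (α : ℝ) (hα : 0 < α) :
    ∃ ε > (0 : ℝ),
      (fun h : ℝ => (4 / π) * ∫ lam in Set.Ioi (0 : ℝ),
          (Real.sin (lam * h / 2)) ^ 2 * α / (ψ lam * (α + ψ lam)))
        =O[nhdsWithin 0 (Set.Ioi 0)]
      (fun h : ℝ => h ^ ε *
        ((4 / π) * ∫ lam in Set.Ioi (0 : ℝ), (Real.sin (lam * h / 2)) ^ 2 / ψ lam)) := by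
  obtain ⟨C, hC⟩ := hψsmall
  have hπ : (0:ℝ) < π := Real.pi_pos
  set δ : ℝ := γ' / 4 with hδdef
  have hδpos : 0 < δ := by positivity
  set ε : ℝ := min (γ' / 4) (δ * γ) with hεdef
  have hεpos : 0 < ε := lt_min (by positivity) (by positivity)
  have hεle : ε ≤ δ := min_le_left _ _
  have hεle2 : ε ≤ δ * γ := min_le_right _ _
  have hεγ' : ε + (2 - γ') ≤ 2 - 3 * δ := by
    have : ε ≤ γ' / 4 := min_le_left _ _
    rw [hδdef]; linarith
  clear_value ε
  refine ⟨ε, hεpos, ?_⟩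
  obtain ⟨C₀, _, hC₀⟩ := hσ₀.exists_nonneg
  rw [isBigOWith_iff] at hC₀
  set K : ℝ := max C 1 with hKdef
  have hK1 : (1:ℝ) ≤ K := le_max_right _ _
  have hCK : C ≤ K := le_max_left _ _
  clear_value K
  rw [isBigO_iff]
  refine ⟨K * C₀ / π + α, ?_⟩
  have hM0 : (0:ℝ) < M := lt_of_lt_of_le one_pos hM
  have hη : (0:ℝ) < min 1 (M ^ (-(1/δ))) :=
    lt_min one_pos (Real.rpow_pos_of_pos hM0 _)
  have hev1 : ∀ᶠ h : ℝ in nhdsWithin 0 (Set.Ioi 0), h < min 1 (M ^ (-(1/δ))) :=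
    Filter.Eventually.filter_mono nhdsWithin_le_nhds (eventually_lt_nhds hη)
  have hev2 : ∀ᶠ h : ℝ in nhdsWithin 0 (Set.Ioi 0), h ∈ Set.Ioi (0:ℝ) :=
    eventually_mem_nhdsWithin
  filter_upwards [hC₀, hev1, hev2] with h hbound hlt hpos
  have h0 : (0:ℝ) < h := hpos
  have h1 : h < 1 := lt_of_lt_of_le hlt (min_le_left _ _)
  have hhM : h ≤ M ^ (-(1/δ)) := (lt_of_lt_of_le hlt (min_le_right _ _)).le
  -- the cut point Λ and its properties
  set Λ : ℝ := h ^ (-δ) with hΛdef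
  have hΛpos : 0 < Λ := Real.rpow_pos_of_pos h0 _
  have hΛ1 : 1 < Λ := by
    rw [hΛdef]
    exact Real.one_lt_rpow_iff_of_pos h0 |>.mpr (Or.inr ⟨h1, by linarith⟩)
  have hMΛ : M ≤ Λ := by
    have h1' : h ^ δ ≤ M⁻¹ := by
      calc h ^ δ ≤ (M ^ (-(1/δ))) ^ δ := Real.rpow_le_rpow h0.le hhM hδpos.le
        _ = M ^ (-(1/δ) * δ) := (Real.rpow_mul hM0.le _ _).symm
        _ = M⁻¹ := by rw [show -(1/δ) * δ = -1 by field_simp, Real.rpow_neg_one]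
    have hp : 0 < h ^ δ := Real.rpow_pos_of_pos h0 δ
    rw [hΛdef, Real.rpow_neg h0.le]
    calc M = (M⁻¹)⁻¹ := (inv_inv M).symm
      _ ≤ (h ^ δ)⁻¹ := inv_anti₀ hp h1'
  have hexp : h ^ 2 * Λ ^ 2 * Λ = h ^ ((2:ℝ) - 3 * δ) := by
    have e1 : Λ ^ (2:ℕ) * Λ = Λ ^ (3:ℕ) := by ring
    have e2 : Λ ^ (3:ℕ) = h ^ (-(3*δ)) := by
      rw [hΛdef, ← Real.rpow_natCast (h ^ (-δ)) 3, ← Real.rpow_mul h0.le]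
      norm_num [mul_comm]
    have e3 : h ^ (2:ℕ) = h ^ ((2:ℝ)) := (Real.rpow_natCast h 2).symm
    rw [mul_assoc, e1, e2, e3, ← Real.rpow_add h0]
    ring_nf
  have hΛγ : Λ ^ γ = (h ^ (δ * γ))⁻¹ := by
    rw [hΛdef, ← Real.rpow_mul h0.le, ← Real.rpow_neg h0.le]
    ring_nf
  clear_value Λ
  -- abbreviations
  set S : ℝ := (4 / π) * ∫ lam in Set.Ioi (0:ℝ), (Real.sin (lam * h / 2)) ^ 2 / ψ lam
    with hSdef
  -- nonnegativity of S
  have hfnn : ∀ lam ∈ Set.Ioi (0:ℝ), 0 ≤ Real.sin (lam * h / 2) ^ 2 / ψ lam :=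
    fun lam hlam => div_nonneg (sq_nonneg _) (hψpos lam hlam).le
  have hInn : 0 ≤ ∫ lam in Set.Ioi (0:ℝ), Real.sin (lam * h / 2) ^ 2 / ψ lam :=
    setIntegral_nonneg measurableSet_Ioi hfnn
  have hSnn : 0 ≤ S := by rw [hSdef]; positivity
  have hlhs : h ^ (2 - γ') ≤ C₀ * S := by
    rwa [Real.norm_eq_abs, Real.norm_eq_abs, abs_of_pos (Real.rpow_pos_of_pos h0 _),
      abs_of_nonneg hSnn] at hbound
  have hCS : 0 < C₀ * S := lt_of_lt_of_le (Real.rpow_pos_of_pos h0 _) hlhs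
  have hSpos : 0 < S := by
    rcases hSnn.lt_or_eq with hS | hS
    · exact hS
    · exfalso; rw [← hS, mul_zero] at hCS; exact lt_irrefl 0 hCS
  -- integrability of f
  have hfint : IntegrableOn (fun lam => Real.sin (lam * h / 2) ^ 2 / ψ lam) (Set.Ioi 0) := by
    by_contra hcon
    have hz : ∫ lam in Set.Ioi (0:ℝ), Real.sin (lam * h / 2) ^ 2 / ψ lam = 0 :=
      integral_undef hcon
    rw [hSdef, hz, mul_zero] at hSpos
    exact lt_irrefl 0 hSpos
  have hIS : ∫ lam in Set.Ioi (0:ℝ), Real.sin (lam * h / 2) ^ 2 / ψ lam = π / 4 * S := by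
    rw [hSdef, ← mul_assoc, div_mul_div_comm, mul_comm π 4, div_self (by positivity), one_mul]
  clear_value S
  have hf_ae : AEMeasurable (fun lam => Real.sin (lam * h / 2) ^ 2 / ψ lam)
      (volume.restrict (Set.Ioi 0)) := hfint.aestronglyMeasurable.aemeasurable
  -- pointwise identity expressing g through f
  have key : ∀ lam ∈ Set.Ioi (0:ℝ),
      Real.sin (lam * h / 2) ^ 2 * α / (ψ lam * (α + ψ lam)) =
      α * ((Real.sin (lam * h / 2) ^ 2 / ψ lam) * (Real.sin (lam * h / 2) ^ 2 / ψ lam)) /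
        (α * (Real.sin (lam * h / 2) ^ 2 / ψ lam) + Real.sin (lam * h / 2) ^ 2) := by
    intro lam hlam
    have hψ := hψpos lam hlam
    rcases eq_or_ne (Real.sin (lam * h / 2) ^ 2) 0 with hs0 | hs0
    · rw [hs0]; simp
    · have hsp : 0 < Real.sin (lam * h / 2) ^ 2 :=
        lt_of_le_of_ne (sq_nonneg _) (Ne.symm hs0)
      have hd : α * (Real.sin (lam * h / 2) ^ 2 / ψ lam) + Real.sin (lam * h / 2) ^ 2 ≠ 0 := by
        positivity
      have haψ : α + ψ lam ≠ 0 := by positivity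
      field_simp
  -- measurability of g
  have hg_aesm : AEStronglyMeasurable
      (fun lam => Real.sin (lam * h / 2) ^ 2 * α / (ψ lam * (α + ψ lam)))
      (volume.restrict (Set.Ioi 0)) := by
    have hs_meas : Measurable (fun lam : ℝ => Real.sin (lam * h / 2) ^ 2) := by fun_prop
    have hG : AEMeasurable (fun lam =>
        α * ((Real.sin (lam * h / 2) ^ 2 / ψ lam) * (Real.sin (lam * h / 2) ^ 2 / ψ lam)) /
          (α * (Real.sin (lam * h / 2) ^ 2 / ψ lam) + Real.sin (lam * h / 2) ^ 2))
        (volume.restrict (Set.Ioi 0)) :=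
      (aemeasurable_const.mul (hf_ae.mul hf_ae)).div
        ((aemeasurable_const.mul hf_ae).add hs_meas.aemeasurable)
    exact hG.aestronglyMeasurable.congr
      (((ae_restrict_iff' measurableSet_Ioi).mpr (Filter.Eventually.of_forall
        (fun lam hlam => (key lam hlam).symm))))
  -- g is nonneg and dominated by f
  have hgnn : ∀ lam ∈ Set.Ioi (0:ℝ),
      0 ≤ Real.sin (lam * h / 2) ^ 2 * α / (ψ lam * (α + ψ lam)) := by
    intro lam hlam
    have hψ := hψpos lam hlam
    positivity
  have hgle : ∀ lam ∈ Set.Ioi (0:ℝ),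
      Real.sin (lam * h / 2) ^ 2 * α / (ψ lam * (α + ψ lam)) ≤
      Real.sin (lam * h / 2) ^ 2 / ψ lam := by
    intro lam hlam
    have hψ := hψpos lam hlam
    rw [← div_mul_div_comm]
    calc Real.sin (lam * h / 2) ^ 2 / ψ lam * (α / (α + ψ lam))
        ≤ Real.sin (lam * h / 2) ^ 2 / ψ lam * 1 := by
          apply mul_le_mul_of_nonneg_left _ (div_nonneg (sq_nonneg _) hψ.le)
          rw [div_le_one (by positivity)]
          linarith
      _ = Real.sin (lam * h / 2) ^ 2 / ψ lam := mul_one _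
  have hgint : IntegrableOn
      (fun lam => Real.sin (lam * h / 2) ^ 2 * α / (ψ lam * (α + ψ lam))) (Set.Ioi 0) := by
    apply hfint.mono' hg_aesm
    refine (ae_restrict_iff' measurableSet_Ioi).mpr (Filter.Eventually.of_forall ?_)
    intro lam hlam
    rw [Real.norm_eq_abs, abs_of_nonneg (hgnn lam hlam)]
    exact hgle lam hlam
  -- split the integral
  have hsub1 : Set.Ioc (0:ℝ) Λ ⊆ Set.Ioi 0 := Set.Ioc_subset_Ioi_self
  have hsub2 : Set.Ioi Λ ⊆ Set.Ioi (0:ℝ) := Set.Ioi_subset_Ioi hΛpos.le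
  have hsplit : (∫ lam in Set.Ioi (0:ℝ),
        Real.sin (lam * h / 2) ^ 2 * α / (ψ lam * (α + ψ lam))) =
      (∫ lam in Set.Ioc (0:ℝ) Λ, Real.sin (lam * h / 2) ^ 2 * α / (ψ lam * (α + ψ lam))) +
      (∫ lam in Set.Ioi Λ, Real.sin (lam * h / 2) ^ 2 * α / (ψ lam * (α + ψ lam))) := by
    rw [← setIntegral_union (Set.Ioc_disjoint_Ioi le_rfl) measurableSet_Ioi
      (hgint.mono_set hsub1) (hgint.mono_set hsub2), Set.Ioc_union_Ioi_eq_Ioi hΛpos.le]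
  -- low-frequency bound
  have hlow : (∫ lam in Set.Ioc (0:ℝ) Λ,
      Real.sin (lam * h / 2) ^ 2 * α / (ψ lam * (α + ψ lam))) ≤ K * (h ^ 2 * Λ ^ 2 / 4) * Λ := by
    have hb : ∀ lam ∈ Set.Ioc (0:ℝ) Λ,
        ‖Real.sin (lam * h / 2) ^ 2 * α / (ψ lam * (α + ψ lam))‖ ≤ K * (h ^ 2 * Λ ^ 2 / 4) := by
      intro lam hlam
      obtain ⟨hl0, hlΛ⟩ := hlam
      have hψ := hψpos lam hl0
      rw [Real.norm_eq_abs, abs_of_nonneg (hgnn lam hl0)]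
      have hsin : Real.sin (lam * h / 2) ^ 2 ≤ lam ^ 2 * h ^ 2 / 4 := by
        calc Real.sin (lam * h / 2) ^ 2 ≤ (lam * h / 2) ^ 2 := Real.sin_sq_le_sq
          _ = lam ^ 2 * h ^ 2 / 4 := by ring
      have hstep : Real.sin (lam * h / 2) ^ 2 * α / (ψ lam * (α + ψ lam)) ≤
          Real.sin (lam * h / 2) ^ 2 / ψ lam := hgle lam hl0
      have hΛ2 : (1:ℝ) ≤ Λ ^ 2 := one_le_pow₀ hΛ1.le
      rcases le_or_gt lam M with hlM | hlM
      · have hCψ := hC lam ⟨hl0, hlM⟩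
        have hf2 : Real.sin (lam * h / 2) ^ 2 / ψ lam ≤ C * (h ^ 2 / 4) := by
          rw [div_le_iff₀ hψ]
          calc Real.sin (lam * h / 2) ^ 2 ≤ lam ^ 2 * h ^ 2 / 4 := hsin
            _ = lam ^ 2 * (h ^ 2 / 4) := by ring
            _ ≤ C * ψ lam * (h ^ 2 / 4) :=
                mul_le_mul_of_nonneg_right hCψ (by positivity)
            _ = C * (h ^ 2 / 4) * ψ lam := by ring
        have hb1 : C * (h ^ 2 / 4) ≤ K * (h ^ 2 / 4) :=
          mul_le_mul_of_nonneg_right hCK (by positivity)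
        have hb2 : K * (h ^ 2 / 4) ≤ K * (h ^ 2 * Λ ^ 2 / 4) := by
          calc K * (h ^ 2 / 4) = K * (h ^ 2 / 4) * 1 := (mul_one _).symm
            _ ≤ K * (h ^ 2 / 4) * Λ ^ 2 :=
                mul_le_mul_of_nonneg_left hΛ2 (by positivity)
            _ = K * (h ^ 2 * Λ ^ 2 / 4) := by ring
        linarith
      · have hψ1 : (1:ℝ) ≤ ψ lam := by
          have h1lam : (1:ℝ) ≤ lam := le_trans hM hlM.le
          have := hψlarge lam hlM.le
          have h1γ : (1:ℝ) ≤ lam ^ γ := by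
            calc (1:ℝ) = 1 ^ γ := (Real.one_rpow γ).symm
              _ ≤ lam ^ γ := Real.rpow_le_rpow zero_le_one h1lam hγ.le
          linarith
        have hf2 : Real.sin (lam * h / 2) ^ 2 / ψ lam ≤ Real.sin (lam * h / 2) ^ 2 :=
          div_le_self (sq_nonneg _) hψ1
        have hlam2 : lam ^ 2 ≤ Λ ^ 2 := pow_le_pow_left₀ hl0.le hlΛ 2
        have hb1 : lam ^ 2 * h ^ 2 / 4 ≤ K * (h ^ 2 * Λ ^ 2 / 4) := by
          calc lam ^ 2 * h ^ 2 / 4 = lam ^ 2 * (h ^ 2 / 4) := by ring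
            _ ≤ Λ ^ 2 * (h ^ 2 / 4) :=
                mul_le_mul_of_nonneg_right hlam2 (by positivity)
            _ = 1 * (h ^ 2 * Λ ^ 2 / 4) := by ring
            _ ≤ K * (h ^ 2 * Λ ^ 2 / 4) :=
                mul_le_mul_of_nonneg_right hK1 (by positivity)
        linarith
    have hvol : (volume (Set.Ioc (0:ℝ) Λ)).toReal = Λ := by
      rw [Real.volume_Ioc, sub_zero, ENNReal.toReal_ofReal hΛpos.le]
    have hnorm := norm_setIntegral_le_of_norm_le_const (μ := volume) (s := Set.Ioc (0:ℝ) Λ)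
      (by rw [Real.volume_Ioc]; exact ENNReal.ofReal_lt_top) hb
    rw [measureReal_def, hvol] at hnorm
    calc (∫ lam in Set.Ioc (0:ℝ) Λ,
          Real.sin (lam * h / 2) ^ 2 * α / (ψ lam * (α + ψ lam)))
        ≤ ‖∫ lam in Set.Ioc (0:ℝ) Λ,
          Real.sin (lam * h / 2) ^ 2 * α / (ψ lam * (α + ψ lam))‖ := le_norm_self _
      _ ≤ K * (h ^ 2 * Λ ^ 2 / 4) * Λ := hnorm
  -- convert the low bound into h^ε * S form
  have hlow2 : h ^ ((2:ℝ) - 3 * δ) ≤ h ^ ε * (C₀ * S) := by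
    calc h ^ ((2:ℝ) - 3 * δ) ≤ h ^ (ε + (2 - γ')) :=
          Real.rpow_le_rpow_of_exponent_ge h0 h1.le hεγ'
      _ = h ^ ε * h ^ (2 - γ') := Real.rpow_add h0 _ _
      _ ≤ h ^ ε * (C₀ * S) :=
          mul_le_mul_of_nonneg_left hlhs (Real.rpow_nonneg h0.le ε)
  have hlowfin : (∫ lam in Set.Ioc (0:ℝ) Λ,
      Real.sin (lam * h / 2) ^ 2 * α / (ψ lam * (α + ψ lam))) ≤
      K * C₀ / 4 * (h ^ ε * S) := by
    have hre : K * (h ^ 2 * Λ ^ 2 / 4) * Λ = K / 4 * (h ^ 2 * Λ ^ 2 * Λ) := by ring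
    rw [hre, hexp] at hlow
    calc (∫ lam in Set.Ioc (0:ℝ) Λ,
          Real.sin (lam * h / 2) ^ 2 * α / (ψ lam * (α + ψ lam)))
        ≤ K / 4 * (h ^ ((2:ℝ) - 3 * δ)) := hlow
      _ ≤ K / 4 * (h ^ ε * (C₀ * S)) :=
          mul_le_mul_of_nonneg_left hlow2 (by positivity)
      _ = K * C₀ / 4 * (h ^ ε * S) := by ring
  -- high-frequency bound
  have hhigh : (∫ lam in Set.Ioi Λ,
      Real.sin (lam * h / 2) ^ 2 * α / (ψ lam * (α + ψ lam))) ≤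
      h ^ ε * α * (π / 4 * S) := by
    have hptwise : ∀ lam ∈ Set.Ioi Λ,
        Real.sin (lam * h / 2) ^ 2 * α / (ψ lam * (α + ψ lam)) ≤
        (h ^ ε * α) * (Real.sin (lam * h / 2) ^ 2 / ψ lam) := by
      intro lam hlam
      have hl0 : (0:ℝ) < lam := lt_trans hΛpos hlam
      have hψ := hψpos lam hl0
      have hγlam := hψlarge lam (le_trans hMΛ (le_of_lt hlam))
      have hΛγpos : 0 < Λ ^ γ := Real.rpow_pos_of_pos hΛpos γ
      have hΛγle : Λ ^ γ ≤ α + ψ lam := by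
        have : Λ ^ γ ≤ lam ^ γ := Real.rpow_le_rpow hΛpos.le (le_of_lt hlam) hγ.le
        linarith
      have hfrac : α / (α + ψ lam) ≤ α * h ^ ε := by
        calc α / (α + ψ lam) ≤ α / Λ ^ γ := by gcongr
          _ = α * h ^ (δ * γ) := by rw [hΛγ, div_eq_mul_inv, inv_inv]
          _ ≤ α * h ^ ε :=
              mul_le_mul_of_nonneg_left
                (Real.rpow_le_rpow_of_exponent_ge h0 h1.le hεle2) hα.le
      calc Real.sin (lam * h / 2) ^ 2 * α / (ψ lam * (α + ψ lam))
          = Real.sin (lam * h / 2) ^ 2 / ψ lam * (α / (α + ψ lam)) := by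
            rw [← div_mul_div_comm]
        _ ≤ Real.sin (lam * h / 2) ^ 2 / ψ lam * (α * h ^ ε) :=
            mul_le_mul_of_nonneg_left hfrac (div_nonneg (sq_nonneg _) hψ.le)
        _ = (h ^ ε * α) * (Real.sin (lam * h / 2) ^ 2 / ψ lam) := by ring
    have hmono : (∫ lam in Set.Ioi Λ,
        Real.sin (lam * h / 2) ^ 2 * α / (ψ lam * (α + ψ lam))) ≤
        ∫ lam in Set.Ioi Λ, (h ^ ε * α) * (Real.sin (lam * h / 2) ^ 2 / ψ lam) :=
      setIntegral_mono_on (hgint.mono_set hsub2)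
        ((hfint.mono_set hsub2).const_mul _) measurableSet_Ioi hptwise
    have htail : (∫ lam in Set.Ioi Λ, Real.sin (lam * h / 2) ^ 2 / ψ lam) ≤
        ∫ lam in Set.Ioi (0:ℝ), Real.sin (lam * h / 2) ^ 2 / ψ lam := by
      apply setIntegral_mono_set hfint
      · exact (ae_restrict_iff' measurableSet_Ioi).mpr (Filter.Eventually.of_forall hfnn)
      · exact HasSubset.Subset.eventuallyLE hsub2
    calc (∫ lam in Set.Ioi Λ,
          Real.sin (lam * h / 2) ^ 2 * α / (ψ lam * (α + ψ lam)))
        ≤ ∫ lam in Set.Ioi Λ, (h ^ ε * α) * (Real.sin (lam * h / 2) ^ 2 / ψ lam) := hmono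
      _ = (h ^ ε * α) * ∫ lam in Set.Ioi Λ, Real.sin (lam * h / 2) ^ 2 / ψ lam :=
          integral_const_mul _ _
      _ ≤ (h ^ ε * α) * ∫ lam in Set.Ioi (0:ℝ), Real.sin (lam * h / 2) ^ 2 / ψ lam :=
          mul_le_mul_of_nonneg_left htail (by positivity)
      _ = h ^ ε * α * (π / 4 * S) := by rw [hIS]
  -- assemble
  have hint_nn : 0 ≤ ∫ lam in Set.Ioi (0:ℝ),
      Real.sin (lam * h / 2) ^ 2 * α / (ψ lam * (α + ψ lam)) :=
    setIntegral_nonneg measurableSet_Ioi hgnn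
  rw [Real.norm_eq_abs, Real.norm_eq_abs, abs_of_nonneg (by positivity),
    abs_of_nonneg (mul_nonneg (Real.rpow_nonneg h0.le ε) hSnn)]
  have htot : (∫ lam in Set.Ioi (0:ℝ),
      Real.sin (lam * h / 2) ^ 2 * α / (ψ lam * (α + ψ lam))) ≤
      K * C₀ / 4 * (h ^ ε * S) + h ^ ε * α * (π / 4 * S) := by
    rw [hsplit]; exact add_le_add hlowfin hhigh
  calc 4 / π * ∫ lam in Set.Ioi (0:ℝ),
        Real.sin (lam * h / 2) ^ 2 * α / (ψ lam * (α + ψ lam))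
      ≤ 4 / π * (K * C₀ / 4 * (h ^ ε * S) + h ^ ε * α * (π / 4 * S)) :=
        mul_le_mul_of_nonneg_left htot (by positivity)
    _ = (K * C₀ / π + α) * (h ^ ε * S) := by field_simp
end

section
/- Let σ₀²(h) = (4/π)∫_0^∞ sin²(λh/2)/ψ(λ) dλ with ψ(λ) = |λ|^β, 1 < β ≤ 2. Then σ₀²(h) = h^(β-1) / (Γ(β) sin(π(β-1)/2)) for all h > 0. -/
open Real

open MeasureTheory Set Filter Topology Function intervalIntegral

set_option maxHeartbeats 1000000

lemma aux_integrable_exp_cos (t : ℝ) (ht : 0 < t) :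
    IntegrableOn (fun s => Real.exp (-(s*t)) * Real.cos s) (Ioi (0:ℝ)) := by
  have hbase : IntegrableOn (fun s : ℝ => Real.exp (-t * s)) (Ioi (0:ℝ)) :=
    exp_neg_integrableOn_Ioi 0 ht
  apply hbase.mono'
  · exact (Measurable.aestronglyMeasurable (by fun_prop))
  · filter_upwards with s
    rw [neg_mul, mul_comm t s, Real.norm_eq_abs, abs_mul, abs_of_nonneg (Real.exp_pos _).le]
    calc Real.exp (-(s*t)) * |Real.cos s| ≤ Real.exp (-(s*t)) * 1 :=
          mul_le_mul_of_nonneg_left (abs_cos_le_one s) (Real.exp_pos _).le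
      _ = Real.exp (-(s*t)) := mul_one _

lemma aux_hasDerivAt (t : ℝ) (s : ℝ) :
    HasDerivAt (fun s => Real.exp (-(s*t)) * (Real.sin s - t * Real.cos s) / (1 + t^2))
      (Real.exp (-(s*t)) * Real.cos s) s := by
  have h1 : HasDerivAt (fun s : ℝ => Real.exp (-(s*t))) (Real.exp (-(s*t)) * (-t)) s := by
    have := ((hasDerivAt_id s).mul_const t).neg.exp
    simpa using this
  have h2 : HasDerivAt (fun s : ℝ => Real.sin s - t * Real.cos s)
      (Real.cos s + t * Real.sin s) s := by
    have := (Real.hasDerivAt_sin s).sub ((Real.hasDerivAt_cos s).const_mul t)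
    refine this.congr_deriv ?_
    ring
  have h3 := (h1.mul h2).div_const (1 + t^2)
  refine h3.congr_deriv ?_
  have h4 : 1 + t^2 ≠ 0 := by positivity
  rw [div_eq_iff h4]
  ring

lemma aux_integral_exp_cos (t : ℝ) (ht : 0 < t) :
    ∫ s in Ioi (0:ℝ), Real.exp (-(s*t)) * Real.cos s = t / (1 + t^2) := by
  have h4 : (1:ℝ) + t^2 ≠ 0 := by positivity
  have key : Tendsto (fun b => ∫ s in (0:ℝ)..b, Real.exp (-(s*t)) * Real.cos s) atTop
      (𝓝 (∫ s in Ioi (0:ℝ), Real.exp (-(s*t)) * Real.cos s)) :=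
    intervalIntegral_tendsto_integral_Ioi 0 (aux_integrable_exp_cos t ht) tendsto_id
  have hval : ∀ b : ℝ, ∫ s in (0:ℝ)..b, Real.exp (-(s*t)) * Real.cos s
      = Real.exp (-(b*t)) * (Real.sin b - t * Real.cos b) / (1 + t^2) + t / (1+t^2) := by
    intro b
    rw [integral_eq_sub_of_hasDerivAt (fun s _ => aux_hasDerivAt t s)]
    · simp
      ring
    · apply Continuous.intervalIntegrable
      fun_prop
  have key2 : Tendsto (fun b => Real.exp (-(b*t)) * (Real.sin b - t * Real.cos b) / (1 + t^2)
      + t / (1+t^2)) atTop (𝓝 (0 + t / (1+t^2))) := by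
    apply Tendsto.add_const
    have hz : Tendsto (fun b : ℝ => Real.exp (-(b*t)) * (1 + t) / (1 + t^2)) atTop (𝓝 0) := by
      have : Tendsto (fun b : ℝ => Real.exp (-(b*t))) atTop (𝓝 0) := by
        have hmt : Tendsto (fun b : ℝ => -(b * t)) atTop atBot := by
          apply tendsto_neg_atTop_atBot.comp
          exact Tendsto.atTop_mul_const ht tendsto_id
        exact Real.tendsto_exp_atBot.comp hmt
      simpa using (this.mul_const ((1+t)/(1+t^2))).congr (fun b => by ring)
    apply squeeze_zero_norm _ hz
    intro b
    rw [Real.norm_eq_abs, abs_div, abs_of_pos (by positivity : (0:ℝ) < 1 + t^2)]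
    apply div_le_div_of_nonneg_right ?_ (by positivity)
    rw [abs_mul, abs_of_nonneg (Real.exp_pos _).le]
    apply mul_le_mul_of_nonneg_left ?_ (Real.exp_pos _).le
    calc |Real.sin b - t * Real.cos b| ≤ |Real.sin b| + |t * Real.cos b| := abs_sub _ _
      _ ≤ 1 + t := by
          rw [abs_mul, abs_of_pos ht]
          gcongr
          · exact Real.abs_sin_le_one b
          · calc t * |Real.cos b| ≤ t * 1 :=
                mul_le_mul_of_nonneg_left (Real.abs_cos_le_one b) ht.le
              _ = t := mul_one t
  have := tendsto_nhds_unique key (by simpa using key2.congr (fun b => (hval b).symm))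
  exact this

lemma aux_integrable_exp (t : ℝ) (ht : 0 < t) :
    IntegrableOn (fun s : ℝ => Real.exp (-(s*t))) (Ioi (0:ℝ)) := by
  have := exp_neg_integrableOn_Ioi 0 ht
  apply this.congr_fun ?_ measurableSet_Ioi
  intro s _; simp only []; rw [neg_mul, mul_comm]

lemma aux_integral_exp (t : ℝ) (ht : 0 < t) :
    ∫ s in Ioi (0:ℝ), Real.exp (-(s*t)) = 1/t := by
  have := integral_comp_mul_right_Ioi (fun x => Real.exp (-x)) 0 ht
  simp only [zero_mul, smul_eq_mul] at this
  rw [this, integral_exp_neg_Ioi]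
  simp [one_div]

lemma aux_integrable_one_sub_cos (t : ℝ) (ht : 0 < t) :
    IntegrableOn (fun s => (1 - Real.cos s) * Real.exp (-(s*t))) (Ioi (0:ℝ)) := by
  have h1 := aux_integrable_exp t ht
  have h2 := aux_integrable_exp_cos t ht
  have h3 := h1.sub h2
  apply (integrableOn_congr_fun ?_ measurableSet_Ioi).mpr h3
  intro s _; simp only [Pi.sub_apply]; ring

lemma aux_integral_one_sub_cos (t : ℝ) (ht : 0 < t) :
    ∫ s in Ioi (0:ℝ), (1 - Real.cos s) * Real.exp (-(s*t)) = 1/(t*(1+t^2)) := by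
  have h1 := aux_integrable_exp t ht
  have h2 := aux_integrable_exp_cos t ht
  have heq : ∀ s : ℝ, (1 - Real.cos s) * Real.exp (-(s*t))
      = Real.exp (-(s*t)) - Real.exp (-(s*t)) * Real.cos s := fun s => by ring
  simp_rw [heq]
  rw [integral_sub h1 h2, aux_integral_exp t ht, aux_integral_exp_cos t ht]
  have h4 : (1:ℝ) + t^2 ≠ 0 := by positivity
  field_simp
  ring

lemma aux_integrable_rpow_div (a : ℝ) (ha : 0 < a) (ha1 : a ≤ 1) :
    IntegrableOn (fun t : ℝ => t ^ (a-1) / (1 + t^2)) (Ioi (0:ℝ)) := by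
  have hmeas : Measurable (fun t : ℝ => t ^ (a-1) / (1 + t^2)) := by fun_prop
  have hIoc : IntegrableOn (fun t : ℝ => t ^ (a-1) / (1 + t^2)) (Ioc (0:ℝ) 1) := by
    have hbase : IntegrableOn (fun t : ℝ => t ^ (a-1)) (Ioc (0:ℝ) 1) := by
      have := intervalIntegral.intervalIntegrable_rpow' (a := 0) (b := 1) (r := a - 1)
        (by linarith)
      rw [intervalIntegrable_iff_integrableOn_Ioc_of_le (by norm_num)] at this
      exact this
    apply hbase.mono' hmeas.aestronglyMeasurable.restrict
    filter_upwards [ae_restrict_mem measurableSet_Ioc] with t htm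
    rw [Real.norm_eq_abs, abs_div, abs_of_nonneg (Real.rpow_nonneg htm.1.le _),
      abs_of_pos (by positivity : (0:ℝ) < 1 + t^2)]
    apply div_le_of_le_mul₀ (by positivity) (Real.rpow_nonneg htm.1.le _)
    nlinarith [Real.rpow_nonneg htm.1.le (a-1), sq_nonneg t]
  have hIoi : IntegrableOn (fun t : ℝ => t ^ (a-1) / (1 + t^2)) (Ioi (1:ℝ)) := by
    have hbase : IntegrableOn (fun t : ℝ => (1 + t^2)⁻¹) (Ioi (1:ℝ)) :=
      integrable_inv_one_add_sq.integrableOn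
    apply hbase.mono' hmeas.aestronglyMeasurable.restrict
    filter_upwards [ae_restrict_mem measurableSet_Ioi] with t htm
    have ht1 : (1:ℝ) ≤ t := le_of_lt htm
    have ht0 : (0:ℝ) < t := lt_of_lt_of_le one_pos ht1
    rw [Real.norm_eq_abs, abs_div, abs_of_nonneg (Real.rpow_nonneg ht0.le _),
      abs_of_pos (by positivity : (0:ℝ) < 1 + t^2), div_eq_mul_inv]
    have : t ^ (a-1) ≤ 1 := by
      calc t ^ (a-1) ≤ t ^ (0:ℝ) := Real.rpow_le_rpow_of_exponent_le ht1 (by linarith)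
        _ = 1 := Real.rpow_zero t
    calc t ^ (a-1) * (1 + t^2)⁻¹ ≤ 1 * (1 + t^2)⁻¹ :=
          mul_le_mul_of_nonneg_right this (by positivity)
      _ = (1 + t^2)⁻¹ := one_mul _
  have : Ioi (0:ℝ) = Ioc 0 1 ∪ Ioi 1 := by
    rw [Ioc_union_Ioi_eq_Ioi]; norm_num
  rw [this]
  exact hIoc.union hIoi

lemma rpow_two_eq (x : ℝ) : x ^ (2:ℝ) = x ^ 2 := by
  rw [show (2:ℝ) = ((2:ℕ):ℝ) by norm_num, Real.rpow_natCast]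

lemma aux_K (a : ℝ) (ha : 0 < a) (ha1 : a ≤ 1) :
    ∫ t in Ioi (0:ℝ), t ^ (a-1) / (1 + t^2) = π / (2 * Real.sin (π * a / 2)) := by
  have ha2 : 0 < a/2 := by linarith
  have ha3 : 0 < 1 - a/2 := by linarith
  set F : ℝ → ℝ → ℝ := fun t v => t ^ (a-1) * Real.exp (-(v * (1+t^2))) with hF
  -- inner integral in v
  have stepA : ∀ t ∈ Ioi (0:ℝ), t ^ (a-1) / (1 + t^2) = ∫ v in Ioi (0:ℝ), F t v := by
    intro t ht
    have h1 : (0:ℝ) < 1 + t^2 := by positivity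
    rw [hF]
    simp only []
    rw [MeasureTheory.integral_const_mul, aux_integral_exp _ h1]
    ring
  -- integrability in v for fixed t
  have intA : ∀ t : ℝ, 0 < t → IntegrableOn (fun v => F t v) (Ioi (0:ℝ)) := by
    intro t ht
    exact (aux_integrable_exp _ (by positivity)).const_mul _
  -- value of the t-integral for fixed v
  have stepB : ∀ v ∈ Ioi (0:ℝ), (∫ t in Ioi (0:ℝ), F t v)
      = Real.exp (-v) * v ^ (-(a/2)) * ((1/2) * Real.Gamma (a/2)) := by
    intro v hv
    have hv0 : 0 < v := hv
    have hsplit : ∀ t : ℝ, F t v = (t ^ (a-1) * Real.exp (-v * t^2)) * Real.exp (-v) := by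
      intro t
      rw [hF]
      simp only []
      rw [mul_assoc, ← Real.exp_add]
      congr 1
      · congr 1
        ring
    simp_rw [hsplit]
    rw [MeasureTheory.integral_mul_const]
    have := integral_rpow_mul_exp_neg_mul_rpow (p := 2) (q := a-1) (b := v)
      (by norm_num) (by linarith) hv0
    simp_rw [rpow_two_eq] at this
    rw [this]
    have h1 : -(a-1+1)/2 = -(a/2) := by ring
    have h2 : (a-1+1)/2 = a/2 := by ring
    rw [h1, h2]
    ring
  -- integrability in t for fixed v
  have intB : ∀ v : ℝ, 0 < v → IntegrableOn (fun t => F t v) (Ioi (0:ℝ)) := by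
    intro v hv
    have hbase := integrableOn_rpow_mul_exp_neg_mul_sq hv (show (-1:ℝ) < a - 1 by linarith)
    have : IntegrableOn (fun t : ℝ => (t ^ (a-1) * Real.exp (-v * t^2)) * Real.exp (-v))
        (Ioi (0:ℝ)) := hbase.mul_const _
    apply (integrableOn_congr_fun ?_ measurableSet_Ioi).mpr this
    intro t _
    rw [hF]; simp only []; rw [mul_assoc, ← Real.exp_add]
    congr 1
    · congr 1
      ring
  -- nonneg facts
  have hK0 : 0 ≤ ∫ t in Ioi (0:ℝ), t ^ (a-1) / (1+t^2) :=
    setIntegral_nonneg measurableSet_Ioi (fun t ht => by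
      have : (0:ℝ) < t := ht
      positivity)
  -- the ENNReal chain
  have hmeasF : Measurable (uncurry fun t v => ENNReal.ofReal (F t v)) := by
    rw [hF]; fun_prop
  have chain : ENNReal.ofReal (∫ t in Ioi (0:ℝ), t ^ (a-1) / (1 + t^2))
      = ENNReal.ofReal ((1/2) * Real.Gamma (a/2) * Real.Gamma (1 - a/2)) := by
    calc ENNReal.ofReal (∫ t in Ioi (0:ℝ), t ^ (a-1) / (1 + t^2))
        = ∫⁻ t in Ioi (0:ℝ), ENNReal.ofReal (t ^ (a-1) / (1 + t^2)) := by
          apply ofReal_integral_eq_lintegral_ofReal (aux_integrable_rpow_div a ha ha1)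
          filter_upwards [ae_restrict_mem measurableSet_Ioi] with t ht
          have : (0:ℝ) < t := ht
          positivity
      _ = ∫⁻ t in Ioi (0:ℝ), ∫⁻ v in Ioi (0:ℝ), ENNReal.ofReal (F t v) := by
          apply setLIntegral_congr_fun measurableSet_Ioi
          intro t ht
          dsimp only
          rw [← ofReal_integral_eq_lintegral_ofReal (intA t ht) ?_]
          · rw [← stepA t ht]
          · filter_upwards [ae_restrict_mem measurableSet_Ioi] with v hv
            rw [hF]; simp only []
            have : (0:ℝ) < t := ht
            positivity
      _ = ∫⁻ v in Ioi (0:ℝ), ∫⁻ t in Ioi (0:ℝ), ENNReal.ofReal (F t v) := by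
          apply lintegral_lintegral_swap
          exact hmeasF.aemeasurable
      _ = ∫⁻ v in Ioi (0:ℝ), ENNReal.ofReal
            (Real.exp (-v) * v ^ (-(a/2)) * ((1/2) * Real.Gamma (a/2))) := by
          apply setLIntegral_congr_fun measurableSet_Ioi
          intro v hv
          dsimp only
          rw [← ofReal_integral_eq_lintegral_ofReal (intB v hv) ?_]
          · rw [stepB v hv]
          · filter_upwards [ae_restrict_mem measurableSet_Ioi] with t ht
            rw [hF]; simp only []
            have : (0:ℝ) < t := ht
            positivity
      _ = ENNReal.ofReal (∫ v in Ioi (0:ℝ),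
            Real.exp (-v) * v ^ (-(a/2)) * ((1/2) * Real.Gamma (a/2))) := by
          rw [ofReal_integral_eq_lintegral_ofReal]
          · have hbase := Real.GammaIntegral_convergent ha3
            have : IntegrableOn (fun v : ℝ => (Real.exp (-v) * v ^ (1 - a/2 - 1))
                * ((1/2) * Real.Gamma (a/2))) (Ioi (0:ℝ)) := hbase.mul_const _
            apply (integrableOn_congr_fun ?_ measurableSet_Ioi).mpr this
            intro v _
            norm_num
          · filter_upwards [ae_restrict_mem measurableSet_Ioi] with v hv
            have : (0:ℝ) < v := hv
            have hg : 0 < Real.Gamma (a/2) := Real.Gamma_pos_of_pos ha2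
            positivity
      _ = ENNReal.ofReal ((1/2) * Real.Gamma (a/2) * Real.Gamma (1 - a/2)) := by
          congr 1
          have heq : ∀ v : ℝ, Real.exp (-v) * v ^ (-(a/2)) * ((1/2) * Real.Gamma (a/2))
              = (Real.exp (-v) * v ^ (1 - a/2 - 1)) * ((1/2) * Real.Gamma (a/2)) := by
            intro v; norm_num
          simp_rw [heq]
          rw [MeasureTheory.integral_mul_const, ← Real.Gamma_eq_integral ha3]
          ring
  have hG : 0 < Real.Gamma (a/2) := Real.Gamma_pos_of_pos ha2
  have hG2 : 0 < Real.Gamma (1 - a/2) := Real.Gamma_pos_of_pos ha3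
  have hreal : (∫ t in Ioi (0:ℝ), t ^ (a-1) / (1 + t^2))
      = (1/2) * Real.Gamma (a/2) * Real.Gamma (1 - a/2) := by
    have := (ENNReal.ofReal_eq_ofReal_iff hK0 (by positivity)).mp chain
    exact this
  rw [hreal]
  have hrefl := Real.Gamma_mul_Gamma_one_sub (a/2)
  have hsin : Real.sin (π * (a/2)) = Real.sin (π * a / 2) := by ring_nf
  rw [mul_assoc, hrefl, hsin]
  have hsinpos : 0 < Real.sin (π * a / 2) := by
    apply Real.sin_pos_of_pos_of_lt_pi
    · positivity
    · nlinarith [Real.pi_pos]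
  field_simp

lemma aux_J (β : ℝ) (hβ1 : 1 < β) (hβ2 : β ≤ 2) :
    ∫ s in Ioi (0:ℝ), (1 - Real.cos s) / s ^ β
      = π / (2 * Real.Gamma β * Real.sin (π * (β-1) / 2)) := by
  have hβ0 : 0 < β := by linarith
  have hΓ : 0 < Real.Gamma β := Real.Gamma_pos_of_pos hβ0
  have ha : 0 < β - 1 := by linarith
  have ha1 : β - 1 ≤ 1 := by linarith
  set G : ℝ → ℝ → ℝ := fun s t => (1 - Real.cos s) * (t ^ (β-1) * Real.exp (-(s*t))) with hG
  have hGnn : ∀ s t : ℝ, 0 < t → 0 ≤ G s t := by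
    intro s t ht
    have h1 : 0 ≤ 1 - Real.cos s := by nlinarith [Real.cos_le_one s]
    have h2 : 0 ≤ t ^ (β-1) := Real.rpow_nonneg ht.le _
    positivity
  have stepA : ∀ s : ℝ, s ∈ Ioi (0:ℝ) →
      Real.Gamma β * ((1 - Real.cos s) / s ^ β) = ∫ t in Ioi (0:ℝ), G s t := by
    intro s hs
    have hs0 : (0:ℝ) < s := hs
    rw [hG]
    simp only []
    rw [MeasureTheory.integral_const_mul, integral_rpow_mul_exp_neg_mul_Ioi hβ0 hs0,
      one_div, Real.inv_rpow hs0.le]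
    have hsβ : s ^ β ≠ 0 := (Real.rpow_pos_of_pos hs0 β).ne'
    field_simp
  have intA : ∀ s : ℝ, 0 < s → IntegrableOn (fun t => G s t) (Ioi (0:ℝ)) := by
    intro s hs
    have hbase := integrableOn_rpow_mul_exp_neg_mul_rpow
      (show (-1:ℝ) < β - 1 by linarith) (show (0:ℝ) < 1 by norm_num) hs
    have hbase2 : IntegrableOn (fun t : ℝ => t ^ (β-1) * Real.exp (-(s*t))) (Ioi (0:ℝ)) := by
      apply (integrableOn_congr_fun ?_ measurableSet_Ioi).mpr hbase
      intro t _
      simp [Real.rpow_one]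
    exact hbase2.const_mul _
  have stepB : ∀ t : ℝ, t ∈ Ioi (0:ℝ) →
      (∫ s in Ioi (0:ℝ), G s t) = t ^ (β-1-1) / (1 + t^2) := by
    intro t ht
    have ht0 : (0:ℝ) < t := ht
    have hcomm : ∀ s : ℝ, G s t = t ^ (β-1) * ((1 - Real.cos s) * Real.exp (-(s*t))) := by
      intro s; rw [hG]; simp only []; ring
    simp_rw [hcomm]
    rw [MeasureTheory.integral_const_mul, aux_integral_one_sub_cos t ht0]
    conv_rhs => rw [Real.rpow_sub_one ht0.ne']
    rw [div_div, mul_one_div]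
  have intB : ∀ t : ℝ, 0 < t → IntegrableOn (fun s => G s t) (Ioi (0:ℝ)) := by
    intro t ht
    have := (aux_integrable_one_sub_cos t ht).const_mul (t ^ (β-1))
    apply (integrableOn_congr_fun ?_ measurableSet_Ioi).mpr this
    intro s _
    rw [hG]; simp only []; ring
  have hmeasG : Measurable (uncurry fun s t => ENNReal.ofReal (G s t)) := by
    rw [hG]; fun_prop
  have hK := aux_K (β - 1) ha ha1
  have hsinpos : 0 < Real.sin (π * (β-1) / 2) := by
    apply Real.sin_pos_of_pos_of_lt_pi
    · positivity
    · nlinarith [Real.pi_pos]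
  have hKpos : 0 < π / (2 * Real.sin (π * (β-1) / 2)) := by
    have := Real.pi_pos
    positivity
  have chain : ENNReal.ofReal (Real.Gamma β)
        * ∫⁻ s in Ioi (0:ℝ), ENNReal.ofReal ((1 - Real.cos s) / s ^ β)
      = ENNReal.ofReal (π / (2 * Real.sin (π * (β-1) / 2))) := by
    calc ENNReal.ofReal (Real.Gamma β)
          * ∫⁻ s in Ioi (0:ℝ), ENNReal.ofReal ((1 - Real.cos s) / s ^ β)
        = ∫⁻ s in Ioi (0:ℝ), ENNReal.ofReal (Real.Gamma β * ((1 - Real.cos s) / s ^ β)) := by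
          rw [← lintegral_const_mul' _ _ ENNReal.ofReal_ne_top]
          apply setLIntegral_congr_fun measurableSet_Ioi
          intro s hs
          dsimp only
          rw [ENNReal.ofReal_mul hΓ.le]
      _ = ∫⁻ s in Ioi (0:ℝ), ∫⁻ t in Ioi (0:ℝ), ENNReal.ofReal (G s t) := by
          apply setLIntegral_congr_fun measurableSet_Ioi
          intro s hs
          dsimp only
          rw [stepA s hs, ofReal_integral_eq_lintegral_ofReal (intA s hs)]
          filter_upwards [ae_restrict_mem measurableSet_Ioi] with t ht
          exact hGnn s t ht
      _ = ∫⁻ t in Ioi (0:ℝ), ∫⁻ s in Ioi (0:ℝ), ENNReal.ofReal (G s t) := by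
          exact lintegral_lintegral_swap hmeasG.aemeasurable
      _ = ∫⁻ t in Ioi (0:ℝ), ENNReal.ofReal (t ^ (β-1-1) / (1 + t^2)) := by
          apply setLIntegral_congr_fun measurableSet_Ioi
          intro t ht
          dsimp only
          rw [← stepB t ht, ofReal_integral_eq_lintegral_ofReal (intB t ht)]
          filter_upwards with s
          exact hGnn s t ht
      _ = ENNReal.ofReal (∫ t in Ioi (0:ℝ), t ^ (β-1-1) / (1 + t^2)) := by
          rw [ofReal_integral_eq_lintegral_ofReal (aux_integrable_rpow_div (β-1) ha ha1)]
          filter_upwards [ae_restrict_mem measurableSet_Ioi] with t ht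
          have ht0 : (0:ℝ) < t := ht
          have : 0 ≤ t ^ (β-1-1) := Real.rpow_nonneg ht0.le _
          positivity
      _ = ENNReal.ofReal (π / (2 * Real.sin (π * (β-1) / 2))) := by rw [hK]
  have hL : (∫⁻ s in Ioi (0:ℝ), ENNReal.ofReal ((1 - Real.cos s) / s ^ β))
      = ENNReal.ofReal (π / (2 * Real.sin (π * (β-1) / 2)) / Real.Gamma β) := by
    rw [ENNReal.ofReal_div_of_pos hΓ]
    refine (ENNReal.eq_div_iff (ENNReal.ofReal_pos.mpr hΓ).ne' ENNReal.ofReal_ne_top).mpr ?_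
    rw [← chain]
  have hfinal : ∫ s in Ioi (0:ℝ), (1 - Real.cos s) / s ^ β
      = π / (2 * Real.sin (π * (β-1) / 2)) / Real.Gamma β := by
    rw [integral_eq_lintegral_of_nonneg_ae ?_ ?_]
    · rw [hL, ENNReal.toReal_ofReal (by positivity)]
    · filter_upwards [ae_restrict_mem measurableSet_Ioi] with s hs
      have hs0 : (0:ℝ) < s := hs
      have h1 : 0 ≤ 1 - Real.cos s := by nlinarith [Real.cos_le_one s]
      positivity
    · exact (Measurable.aestronglyMeasurable (by fun_prop)).restrict
  rw [hfinal, div_div]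
  ring_nf

theorem sigma0_sq_stable (β : ℝ) (hβ1 : 1 < β) (hβ2 : β ≤ 2) (h : ℝ) (hh : 0 < h) :
    (4 / π) * ∫ lam in Set.Ioi (0 : ℝ), (Real.sin (lam * h / 2)) ^ 2 / lam ^ β
      = h ^ (β - 1) / (Real.Gamma β * Real.sin (π * (β - 1) / 2)) := by
  have hβ0 : 0 < β := by linarith
  have hΓ : 0 < Real.Gamma β := Real.Gamma_pos_of_pos hβ0
  have hsinpos : 0 < Real.sin (π * (β-1) / 2) := by
    apply Real.sin_pos_of_pos_of_lt_pi
    · nlinarith [Real.pi_pos]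
    · nlinarith [Real.pi_pos]
  set g : ℝ → ℝ := fun s => Real.sin (s/2)^2 / s ^ β with hg
  have step1 : ∫ lam in Ioi (0:ℝ), (Real.sin (lam * h / 2)) ^ 2 / lam ^ β
      = ∫ lam in Ioi (0:ℝ), h ^ β * g (h * lam) := by
    apply setIntegral_congr_fun measurableSet_Ioi
    intro lam hlam
    have hl : (0:ℝ) < lam := hlam
    rw [hg]
    simp only []
    rw [Real.mul_rpow hh.le hl.le]
    have h1 : h ^ β ≠ 0 := (Real.rpow_pos_of_pos hh β).ne'
    have h2 : lam ^ β ≠ 0 := (Real.rpow_pos_of_pos hl β).ne'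
    rw [show h * lam / 2 = lam * h / 2 by ring]
    field_simp
  have step2 : ∫ lam in Ioi (0:ℝ), g (h * lam) = h⁻¹ * ∫ s in Ioi (0:ℝ), g s := by
    have := integral_comp_mul_left_Ioi g 0 hh
    rw [mul_zero] at this
    rw [this, smul_eq_mul]
  have step3 : ∫ s in Ioi (0:ℝ), g s
      = (1/2) * ∫ s in Ioi (0:ℝ), (1 - Real.cos s) / s ^ β := by
    have hpt : ∀ s : ℝ, g s = (1/2) * ((1 - Real.cos s) / s ^ β) := by
      intro s
      rw [hg]
      simp only []
      have : Real.sin (s/2)^2 = 1/2 - Real.cos (2*(s/2))/2 := Real.sin_sq_eq_half_sub (s/2)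
      rw [show 2*(s/2) = s by ring] at this
      rw [this]
      ring
    simp_rw [hpt]
    rw [MeasureTheory.integral_const_mul]
  rw [step1, MeasureTheory.integral_const_mul, step2, step3, aux_J β hβ1 hβ2]
  have hπ : π ≠ 0 := Real.pi_ne_zero
  have hhne : h ≠ 0 := hh.ne'
  have hrw : h ^ β * h⁻¹ = h ^ (β - 1) := by
    rw [Real.rpow_sub hh, Real.rpow_one, div_eq_mul_inv]
  field_simp
  rw [show h ^ β = h ^ β * h⁻¹ * h by field_simp, hrw]
  ring
end
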